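/- arXiv:1607.01658 — 3 statements merged into one kernel-verified Lean document; each statement's English description precedes it below -/
import Mathlib

section
/- For every sign ε ∈ {−1,+1}: (i) if |v| ≤ θ₀ then |−2α + εv| ≥ 2α − θ₀ > 0 and |T_ε(v)| ≤ θ₀, i.e. T_ε maps the stable cone J₋ into itself; (ii) if 2|u|(1−α) ≤ θ₀ then 2u(1−α) + 2α ≥ 2α − θ₀ > 0 and 2(1−α)·|S_ε(u)| ≤ θ₀, i.e. S_ε maps the unstable cone J₊ into itself. -/
noncomputable section

/-- `θ₀ = α − √(α² + 2α − 2)`. -/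
def theta0 (α : ℝ) : ℝ := α - Real.sqrt (α ^ 2 + 2 * α - 2)

/-- The Möbius map `T_ε(v) = 2(1−α)/(−2α + εv)` acting on stable directions. -/
def Tmap (α ε v : ℝ) : ℝ := 2 * (1 - α) / (-2 * α + ε * v)

/-- The Möbius map `S_ε(u) = ε/(2u(1−α) + 2α)` acting on unstable directions. -/
def Smap (α ε u : ℝ) : ℝ := ε / (2 * u * (1 - α) + 2 * α)

/-- for each sign `ε ∈ {−1,+1}`:
(i) if `|v| ≤ θ₀` then `|−2α + εv| ≥ 2α − θ₀ > 0` and `|T_ε(v)| ≤ θ₀`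
(the stable cone `J₋` is `T_ε`-invariant);
(ii) if `2|u|(1−α) ≤ θ₀` then `2u(1−α) + 2α ≥ 2α − θ₀ > 0` and `2(1−α)|S_ε(u)| ≤ θ₀`
(the unstable cone `J₊` is `S_ε`-invariant). -/
theorem statement6 (α : ℝ) (hα : α ∈ Set.Ioo (3/4 : ℝ) 1)
    (ε : ℝ) (hε : ε = 1 ∨ ε = -1) :
    (∀ v : ℝ, |v| ≤ theta0 α →
      (2 * α - theta0 α ≤ |(-2 * α + ε * v)| ∧ 0 < 2 * α - theta0 α) ∧
      |Tmap α ε v| ≤ theta0 α) ∧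
    (∀ u : ℝ, 2 * |u| * (1 - α) ≤ theta0 α →
      (2 * α - theta0 α ≤ 2 * u * (1 - α) + 2 * α ∧ 0 < 2 * α - theta0 α) ∧
      2 * (1 - α) * |Smap α ε u| ≤ theta0 α) := by
  obtain ⟨h1, h2⟩ := hα
  have hd : (0:ℝ) ≤ α ^ 2 + 2 * α - 2 := by nlinarith
  have hs2 : Real.sqrt (α ^ 2 + 2 * α - 2) ^ 2 = α ^ 2 + 2 * α - 2 := Real.sq_sqrt hd
  have hs0 : 0 ≤ Real.sqrt (α ^ 2 + 2 * α - 2) := Real.sqrt_nonneg _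
  have hθpos : 0 < theta0 α := by unfold theta0; nlinarith
  have hθlt : theta0 α < α := by unfold theta0 at *; nlinarith
  have hden : 0 < 2 * α - theta0 α := by linarith
  have hid : 2 * (1 - α) = theta0 α * (2 * α - theta0 α) := by unfold theta0; nlinarith
  have hεabs : |ε| = 1 := by rcases hε with h | h <;> simp [h]
  constructor
  · intro v hv
    have hv' := abs_le.mp hv
    have habs : 2 * α - theta0 α ≤ |(-2 * α + ε * v)| := by
      rcases hε with h | h <;> subst h
      · rw [abs_of_neg (by nlinarith)]; linarith
      · rw [abs_of_neg (by nlinarith)]; linarith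
    refine ⟨⟨habs, hden⟩, ?_⟩
    have hdpos : 0 < |(-2 * α + ε * v)| := lt_of_lt_of_le hden habs
    rw [Tmap, abs_div, abs_of_nonneg (by linarith : (0:ℝ) ≤ 2 * (1 - α)),
      div_le_iff₀ hdpos]
    nlinarith
  · intro u hu
    have hu1 : -u ≤ |u| := neg_le_abs u
    have hD : 2 * α - theta0 α ≤ 2 * u * (1 - α) + 2 * α := by nlinarith
    refine ⟨⟨hD, hden⟩, ?_⟩
    have hDpos : 0 < 2 * u * (1 - α) + 2 * α := lt_of_lt_of_le hden hD
    rw [Smap, abs_div, hεabs, abs_of_pos hDpos]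
    rw [mul_one_div, div_le_iff₀ hDpos]
    nlinarith
end
end

section
/- For every sign ε ∈ {−1,+1}: if |v| ≤ θ₀ then the derivative of T_ε at v satisfies |T_ε′(v)| = 2(1−α)/(−2α + εv)² ≤ κ, with equality when v = ε·θ₀; and if 2|u|(1−α) ≤ θ₀ then the derivative of S_ε at u satisfies |S_ε′(u)| = 2(1−α)/(2u(1−α) + 2α)² ≤ κ, with equality when 2u(1−α) = −θ₀. In particular, the supremum of |T_ε′| over J₋ and of |S_ε′| over J₊ both equal κ. -/
noncomputable section

/-- `κ = (α − √(α² + 2α − 2))/(α + √(α² + 2α − 2))`. -/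
def kappa (α : ℝ) : ℝ :=
  (α - Real.sqrt (α ^ 2 + 2 * α - 2)) / (α + Real.sqrt (α ^ 2 + 2 * α - 2))

/-- for each sign `ε ∈ {−1,+1}`: on the stable cone `J₋ = [−θ₀,θ₀]` one has
`|T_ε′(v)| = 2(1−α)/(−2α + εv)² ≤ κ` with equality when `v = ε·θ₀`; on the unstable cone
`J₊ = {u : 2|u|(1−α) ≤ θ₀}` one has `|S_ε′(u)| = 2(1−α)/(2u(1−α) + 2α)² ≤ κ` with equality
when `2u(1−α) = −θ₀`. In particular `sup_{J₋} |T_ε′| = κ = sup_{J₊} |S_ε′|`. -/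
theorem statement8 (α : ℝ) (hα : α ∈ Set.Ioo (3/4 : ℝ) 1)
    (ε : ℝ) (hε : ε = 1 ∨ ε = -1) :
    (∀ v : ℝ, |v| ≤ theta0 α →
      |deriv (Tmap α ε) v| = 2 * (1 - α) / (-2 * α + ε * v) ^ 2 ∧
      |deriv (Tmap α ε) v| ≤ kappa α) ∧
    |deriv (Tmap α ε) (ε * theta0 α)| = kappa α ∧
    (∀ u : ℝ, 2 * |u| * (1 - α) ≤ theta0 α →
      |deriv (Smap α ε) u| = 2 * (1 - α) / (2 * u * (1 - α) + 2 * α) ^ 2 ∧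
      |deriv (Smap α ε) u| ≤ kappa α) ∧
    (∀ u : ℝ, 2 * u * (1 - α) = -theta0 α → |deriv (Smap α ε) u| = kappa α) ∧
    IsGreatest ((fun v => |deriv (Tmap α ε) v|) '' {v : ℝ | |v| ≤ theta0 α}) (kappa α) ∧
    IsGreatest ((fun u => |deriv (Smap α ε) u|) '' {u : ℝ | 2 * |u| * (1 - α) ≤ theta0 α})
      (kappa α) := by
  obtain ⟨hα34, hα1⟩ := hα
  set s : ℝ := Real.sqrt (α ^ 2 + 2 * α - 2) with hs_def
  have hdisc : (0:ℝ) ≤ α ^ 2 + 2 * α - 2 := by nlinarith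
  have hs_nonneg : 0 ≤ s := Real.sqrt_nonneg _
  have hs_sq : s ^ 2 = α ^ 2 + 2 * α - 2 := Real.sq_sqrt hdisc
  have hs_lt : s < α := by nlinarith
  have hθ : theta0 α = α - s := rfl
  have hθ_pos : 0 < theta0 α := by rw [hθ]; linarith
  have hαs_pos : 0 < α + s := by linarith
  have h1α : 0 < 1 - α := by linarith
  have hεabs : |ε| = 1 := by rcases hε with h | h <;> simp [h]
  have hε2 : ε * ε = 1 := by rcases hε with h | h <;> simp [h]
  have hκ : kappa α = 2 * (1 - α) / (α + s) ^ 2 := by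
    rw [kappa, ← hs_def]
    rw [div_eq_div_iff (by positivity) (by positivity)]
    nlinarith
  -- value of |deriv| for general numerator/denominator
  have habs_num : |(-(2 * (1 - α)) * ε)| = 2 * (1 - α) := by
    rw [abs_mul, hεabs, mul_one, abs_neg, abs_of_pos (by linarith)]
  -- T derivative
  have hderivT : ∀ v : ℝ, -2 * α + ε * v ≠ 0 →
      deriv (Tmap α ε) v = -(2 * (1 - α)) * ε / (-2 * α + ε * v) ^ 2 := by
    intro v hv
    have h1 : HasDerivAt (fun v : ℝ => -2 * α + ε * v) ε v := by
      simpa using (HasDerivAt.const_add (-2 * α) ((hasDerivAt_id v).const_mul ε))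
    have h2 := (hasDerivAt_const v (2 * (1 - α))).div h1 hv
    have h3 : HasDerivAt (Tmap α ε)
        ((0 * (-2 * α + ε * v) - 2 * (1 - α) * ε) / (-2 * α + ε * v) ^ 2) v := h2
    rw [h3.deriv]; ring
  have hderivS : ∀ u : ℝ, 2 * u * (1 - α) + 2 * α ≠ 0 →
      deriv (Smap α ε) u = -(2 * (1 - α)) * ε / (2 * u * (1 - α) + 2 * α) ^ 2 := by
    intro u hu
    have h1 : HasDerivAt (fun u : ℝ => 2 * u * (1 - α) + 2 * α) (2 * (1 - α)) u := by
      have := (((hasDerivAt_id u).const_mul (2:ℝ)).mul_const (1 - α)).add_const (2 * α)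
      simpa using this
    have h2 := (hasDerivAt_const u ε).div h1 hu
    have h3 : HasDerivAt (Smap α ε)
        ((0 * (2 * u * (1 - α) + 2 * α) - ε * (2 * (1 - α))) / (2 * u * (1 - α) + 2 * α) ^ 2)
        u := h2
    rw [h3.deriv]; ring
  -- main T bound
  have hT : ∀ v : ℝ, |v| ≤ theta0 α →
      |deriv (Tmap α ε) v| = 2 * (1 - α) / (-2 * α + ε * v) ^ 2 ∧
      |deriv (Tmap α ε) v| ≤ kappa α := by
    intro v hv
    have hεv : |ε * v| ≤ theta0 α := by rw [abs_mul, hεabs, one_mul]; exact hv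
    have hεv' : ε * v ≤ α - s := by
      have := (abs_le.mp hεv).2; rwa [hθ] at this
    have hd_neg : -2 * α + ε * v ≤ -(α + s) := by linarith
    have hd_ne : -2 * α + ε * v ≠ 0 := by nlinarith
    have hd_sq : (α + s) ^ 2 ≤ (-2 * α + ε * v) ^ 2 := by nlinarith
    have habs : |deriv (Tmap α ε) v| = 2 * (1 - α) / (-2 * α + ε * v) ^ 2 := by
      rw [hderivT v hd_ne, abs_div, habs_num, abs_of_pos (by positivity)]
    refine ⟨habs, ?_⟩
    rw [habs, hκ]
    exact div_le_div_of_nonneg_left (by linarith) (by positivity) hd_sq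
  -- T equality
  have hTeq : |deriv (Tmap α ε) (ε * theta0 α)| = kappa α := by
    have hmem : |ε * theta0 α| ≤ theta0 α := by
      rw [abs_mul, hεabs, one_mul, abs_of_pos hθ_pos]
    rw [(hT _ hmem).1, hκ]
    have : ε * (ε * theta0 α) = theta0 α := by rw [← mul_assoc, hε2, one_mul]
    rw [this, hθ]
    congr 1
    ring
  -- S bound
  have hS : ∀ u : ℝ, 2 * |u| * (1 - α) ≤ theta0 α →
      |deriv (Smap α ε) u| = 2 * (1 - α) / (2 * u * (1 - α) + 2 * α) ^ 2 ∧
      |deriv (Smap α ε) u| ≤ kappa α := by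
    intro u hu
    have habs_u : -|u| ≤ u := neg_abs_le u
    have hlow : -(α - s) ≤ 2 * u * (1 - α) := by
      have : -(2 * |u| * (1 - α)) ≤ 2 * u * (1 - α) := by nlinarith [neg_abs_le u]
      rw [hθ] at hu; linarith
    have hd_pos : α + s ≤ 2 * u * (1 - α) + 2 * α := by linarith
    have hd_ne : 2 * u * (1 - α) + 2 * α ≠ 0 := by nlinarith
    have hd_sq : (α + s) ^ 2 ≤ (2 * u * (1 - α) + 2 * α) ^ 2 := by nlinarith
    have habs : |deriv (Smap α ε) u| = 2 * (1 - α) / (2 * u * (1 - α) + 2 * α) ^ 2 := by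
      rw [hderivS u hd_ne, abs_div, habs_num, abs_of_pos (by positivity)]
    refine ⟨habs, ?_⟩
    rw [habs, hκ]
    exact div_le_div_of_nonneg_left (by linarith) (by positivity) hd_sq
  -- S equality
  have hSeq : ∀ u : ℝ, 2 * u * (1 - α) = -theta0 α → |deriv (Smap α ε) u| = kappa α := by
    intro u hu
    have hmem : 2 * |u| * (1 - α) ≤ theta0 α := by
      have : |2 * u * (1 - α)| = theta0 α := by rw [hu, abs_neg, abs_of_pos hθ_pos]
      have h2 : |2 * u * (1 - α)| = 2 * |u| * (1 - α) := by
        rw [abs_mul, abs_mul, abs_of_nonneg (by norm_num : (0:ℝ) ≤ 2),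
          abs_of_pos h1α]
      linarith [le_of_eq (h2.symm.trans this)]
    rw [(hS u hmem).1, hu, hθ, hκ]
    congr 1
    ring
  refine ⟨hT, hTeq, hS, hSeq, ⟨⟨ε * theta0 α, ?_, hTeq⟩, ?_⟩,
    ⟨⟨-theta0 α / (2 * (1 - α)), ?_, ?_⟩, ?_⟩⟩
  · show |ε * theta0 α| ≤ theta0 α
    rw [abs_mul, hεabs, one_mul, abs_of_pos hθ_pos]
  · rintro x ⟨v, hv, rfl⟩
    exact (hT v hv).2
  · show 2 * |(-theta0 α / (2 * (1 - α)))| * (1 - α) ≤ theta0 α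
    rw [abs_div, abs_neg, abs_of_pos hθ_pos, abs_of_pos (by linarith : (0:ℝ) < 2 * (1 - α))]
    have hne : (1 : ℝ) - α ≠ 0 := by linarith
    have : 2 * (theta0 α / (2 * (1 - α))) * (1 - α) = theta0 α := by
      field_simp
    linarith [le_of_eq this]
  · exact hSeq _ (by field_simp)
  · rintro x ⟨u, hu, rfl⟩
    exact (hS u hu).2
end
end

section
/- For every sign ε ∈ {−1,+1}, T_ε is Lipschitz with constant κ on J₋ and S_ε is Lipschitz with constant κ on J₊. Consequently, for every n ≥ 1, all signs ε₀,…,ε_{n−1} ∈ {−1,+1}, and all v, v′ ∈ [−θ₀, θ₀], |(T_{ε₀}∘T_{ε₁}∘⋯∘T_{ε_{n−1}})(v) − (T_{ε₀}∘⋯∘T_{ε_{n−1}})(v′)| ≤ κⁿ·|v − v′|; and analogously for all u, u′ ∈ J₊, |(S_{ε₀}∘⋯∘S_{ε_{n−1}})(u) − (S_{ε₀}∘⋯∘S_{ε_{n−1}})(u′)| ≤ κⁿ·|u − u′|. -/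
noncomputable section

/-- `Titer α ε n = T_{ε 0} ∘ T_{ε 1} ∘ ⋯ ∘ T_{ε (n−1)}`. -/
def Titer (α : ℝ) : (ℕ → ℝ) → ℕ → ℝ → ℝ
  | _, 0 => id
  | ε, n + 1 => fun v => Tmap α (ε 0) (Titer α (fun k => ε (k + 1)) n v)

/-- `Siter α η n = S_{η 0} ∘ S_{η 1} ∘ ⋯ ∘ S_{η (n−1)}`. -/
def Siter (α : ℝ) : (ℕ → ℝ) → ℕ → ℝ → ℝ
  | _, 0 => id
  | η, n + 1 => fun u => Smap α (η 0) (Siter α (fun k => η (k + 1)) n u)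

/-!
The Möbius maps in question are `x ↦ c / d(x)` with `d` affine, so
`|c/d(x) - c/d(y)| = |c| |d(x) - d(y)| / (|d(x)| |d(y)|)`, and the Lipschitz constant comes from
a lower bound on the denominators. On either cone that bound is `2α - θ₀ = α + √(α² + 2α - 2)`,
and since `θ₀` is a root of `x² - 2αx + 2(1 - α)`, the resulting constant `2(1 - α)/(2α - θ₀)²`
equals `θ₀/(2α - θ₀) = κ`. The same root relation shows that both cones are invariant, so the
Lipschitz bounds compose along any word of signs.
-/

open Set

theorem abs_div_sub_div_le_of_le_abs {c p q m : ℝ} (hm : 0 < m) (hp : m ≤ |p|) (hq : m ≤ |q|) :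
    |c / p - c / q| ≤ |c| / m ^ 2 * |p - q| := by
  have hp0 : p ≠ 0 := abs_pos.1 (hm.trans_le hp)
  have hq0 : q ≠ 0 := abs_pos.1 (hm.trans_le hq)
  have hpq : m ^ 2 ≤ |p * q| := by rw [abs_mul, sq]; gcongr
  calc |c / p - c / q| = |c| * |p - q| / |p * q| := by
        rw [div_sub_div _ _ hp0 hq0, abs_div, show c * q - p * c = c * (q - p) by ring, abs_mul,
          abs_sub_comm q p]
    _ ≤ |c| * |p - q| / m ^ 2 := by gcongr
    _ = |c| / m ^ 2 * |p - q| := by ring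

theorem LipschitzOnWith.abs_sub_le_of_toNNReal {f : ℝ → ℝ} {s : Set ℝ} {K : ℝ}
    (hK : 0 ≤ K) (hf : LipschitzOnWith K.toNNReal f s) {x y : ℝ} (hx : x ∈ s)
    (hy : y ∈ s) : |f x - f y| ≤ K * |x - y| := by
  simpa [Real.dist_eq, Real.coe_toNNReal _ hK] using hf.dist_le_mul x hx y hy

def stableCone (α : ℝ) : Set ℝ := Icc (-(theta0 α)) (theta0 α)

def unstableCone (α : ℝ) : Set ℝ := {u | 2 * |u| * (1 - α) ≤ theta0 α}

section

variable {α : ℝ}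

theorem theta0_pos (hα : α ∈ Ioo (3/4 : ℝ) 1) : 0 < theta0 α := by
  obtain ⟨h₁, h₂⟩ := hα
  rw [theta0, sub_pos, Real.sqrt_lt' (by linarith)]
  nlinarith

theorem theta0_lt_self (hα : α ∈ Ioo (3/4 : ℝ) 1) : theta0 α < α := by
  obtain ⟨h₁, h₂⟩ := hα
  rw [theta0, sub_lt_self_iff, Real.sqrt_pos]
  nlinarith

theorem theta0_mul_two_mul_sub_theta0 (hα : α ∈ Ioo (3/4 : ℝ) 1) :
    theta0 α * (2 * α - theta0 α) = 2 * (1 - α) := by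
  obtain ⟨h₁, h₂⟩ := hα
  have hs := Real.sq_sqrt (show 0 ≤ α ^ 2 + 2 * α - 2 by nlinarith)
  rw [theta0]
  linear_combination -hs

theorem two_mul_sub_theta0_pos (hα : α ∈ Ioo (3/4 : ℝ) 1) : 0 < 2 * α - theta0 α := by
  linarith [theta0_lt_self hα, theta0_pos hα]

theorem kappa_eq (hα : α ∈ Ioo (3/4 : ℝ) 1) :
    kappa α = 2 * (1 - α) / (2 * α - theta0 α) ^ 2 := by
  have hd := two_mul_sub_theta0_pos hα
  rw [← theta0_mul_two_mul_sub_theta0 hα, kappa, theta0]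
  field_simp
  ring

theorem kappa_nonneg (hα : α ∈ Ioo (3/4 : ℝ) 1) : 0 ≤ kappa α := by
  have h₁ : 0 < 1 - α := by linarith [hα.2]
  rw [kappa_eq hα]
  positivity

theorem two_mul_sub_theta0_le_abs_of_mem_stableCone {ε v : ℝ} (hε : |ε| ≤ 1)
    (hv : v ∈ stableCone α) : 2 * α - theta0 α ≤ |-2 * α + ε * v| := by
  have hv' : |v| ≤ theta0 α := abs_le.2 hv
  have hεv : ε * v ≤ |v| :=
    (le_abs_self _).trans (by rw [abs_mul]; exact mul_le_of_le_one_left (abs_nonneg v) hε)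
  linarith [neg_abs_le (-2 * α + ε * v)]

theorem two_mul_sub_theta0_le_of_mem_unstableCone {u : ℝ} (hα : α ≤ 1)
    (hu : u ∈ unstableCone α) : 2 * α - theta0 α ≤ 2 * u * (1 - α) + 2 * α := by
  have hu' : -|u| * (1 - α) ≤ u * (1 - α) :=
    mul_le_mul_of_nonneg_right (neg_abs_le u) (sub_nonneg.2 hα)
  have : 2 * |u| * (1 - α) ≤ theta0 α := hu
  linarith

theorem mapsTo_Tmap {ε : ℝ} (hα : α ∈ Ioo (3/4 : ℝ) 1) (hε : |ε| ≤ 1) :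
    MapsTo (Tmap α ε) (stableCone α) (stableCone α) := by
  intro v hv
  have hd := two_mul_sub_theta0_le_abs_of_mem_stableCone hε hv
  have hm := two_mul_sub_theta0_pos hα
  have hc : 0 < 2 * (1 - α) := by linarith [hα.2]
  refine abs_le.1 ?_
  calc |Tmap α ε v| = 2 * (1 - α) / |-2 * α + ε * v| := by
        rw [Tmap, abs_div, abs_of_pos hc]
    _ ≤ 2 * (1 - α) / (2 * α - theta0 α) := div_le_div_of_nonneg_left hc.le hm hd
    _ = theta0 α := by
        rw [div_eq_iff hm.ne', theta0_mul_two_mul_sub_theta0 hα]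

theorem mapsTo_Smap {ε : ℝ} (hα : α ∈ Ioo (3/4 : ℝ) 1) (hε : |ε| ≤ 1) :
    MapsTo (Smap α ε) (unstableCone α) (unstableCone α) := by
  intro u hu
  have hd := two_mul_sub_theta0_le_of_mem_unstableCone hα.2.le hu
  have hm := two_mul_sub_theta0_pos hα
  have hc : 0 < 2 * (1 - α) := by linarith [hα.2]
  have hS : |Smap α ε u| ≤ 1 / (2 * α - theta0 α) := by
    rw [Smap, abs_div, abs_of_pos (hm.trans_le hd)]
    exact div_le_div₀ zero_le_one hε hm hd
  calc 2 * |Smap α ε u| * (1 - α) ≤ 2 * (1 - α) * (1 / (2 * α - theta0 α)) := by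
        nlinarith
    _ = theta0 α := by
        rw [mul_one_div, div_eq_iff hm.ne', theta0_mul_two_mul_sub_theta0 hα]

theorem lipschitzOnWith_Tmap {ε : ℝ} (hα : α ∈ Ioo (3/4 : ℝ) 1) (hε : |ε| ≤ 1) :
    LipschitzOnWith (kappa α).toNNReal (Tmap α ε) (stableCone α) := by
  refine LipschitzOnWith.of_dist_le_mul fun v hv v' hv' => ?_
  have hm := two_mul_sub_theta0_pos hα
  have hc : 0 < 2 * (1 - α) := by linarith [hα.2]
  rw [Real.coe_toNNReal _ (kappa_nonneg hα), Real.dist_eq, Real.dist_eq]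
  calc |Tmap α ε v - Tmap α ε v'|
      ≤ |2 * (1 - α)| / (2 * α - theta0 α) ^ 2 * |(-2 * α + ε * v) - (-2 * α + ε * v')| :=
        abs_div_sub_div_le_of_le_abs hm
          (two_mul_sub_theta0_le_abs_of_mem_stableCone hε hv)
          (two_mul_sub_theta0_le_abs_of_mem_stableCone hε hv')
    _ = kappa α * (|ε| * |v - v'|) := by
        rw [show -2 * α + ε * v - (-2 * α + ε * v') = ε * (v - v') by ring, abs_mul ε,
          abs_of_pos hc, kappa_eq hα]
    _ ≤ kappa α * |v - v'| := by
        gcongr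
        · exact kappa_nonneg hα
        · exact mul_le_of_le_one_left (abs_nonneg _) hε

theorem lipschitzOnWith_Smap {ε : ℝ} (hα : α ∈ Ioo (3/4 : ℝ) 1) (hε : |ε| ≤ 1) :
    LipschitzOnWith (kappa α).toNNReal (Smap α ε) (unstableCone α) := by
  refine LipschitzOnWith.of_dist_le_mul fun u hu u' hu' => ?_
  have hm := two_mul_sub_theta0_pos hα
  have hc : 0 < 2 * (1 - α) := by linarith [hα.2]
  have hd := two_mul_sub_theta0_le_of_mem_unstableCone hα.2.le hu
  have hd' := two_mul_sub_theta0_le_of_mem_unstableCone hα.2.le hu'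
  rw [Real.coe_toNNReal _ (kappa_nonneg hα), Real.dist_eq, Real.dist_eq]
  calc |Smap α ε u - Smap α ε u'|
      ≤ |ε| / (2 * α - theta0 α) ^ 2 *
          |(2 * u * (1 - α) + 2 * α) - (2 * u' * (1 - α) + 2 * α)| :=
        abs_div_sub_div_le_of_le_abs hm (hd.trans (le_abs_self _)) (hd'.trans (le_abs_self _))
    _ = |ε| * (kappa α * |u - u'|) := by
        rw [show 2 * u * (1 - α) + 2 * α - (2 * u' * (1 - α) + 2 * α) = 2 * (1 - α) * (u - u')
          by ring, abs_mul, abs_of_pos hc, kappa_eq hα]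
        ring
    _ ≤ kappa α * |u - u'| :=
        mul_le_of_le_one_left (mul_nonneg (kappa_nonneg hα) (abs_nonneg _)) hε

theorem mapsTo_Titer (hα : α ∈ Ioo (3/4 : ℝ) 1) (n : ℕ) {ε : ℕ → ℝ} (hε : ∀ k, |ε k| ≤ 1) :
    MapsTo (Titer α ε n) (stableCone α) (stableCone α) := by
  induction n generalizing ε with
  | zero => exact mapsTo_id _
  | succ n ih => exact (mapsTo_Tmap hα (hε 0)).comp (ih fun k => hε (k + 1))

theorem mapsTo_Siter (hα : α ∈ Ioo (3/4 : ℝ) 1) (n : ℕ) {ε : ℕ → ℝ} (hε : ∀ k, |ε k| ≤ 1) :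
    MapsTo (Siter α ε n) (unstableCone α) (unstableCone α) := by
  induction n generalizing ε with
  | zero => exact mapsTo_id _
  | succ n ih => exact (mapsTo_Smap hα (hε 0)).comp (ih fun k => hε (k + 1))

theorem lipschitzOnWith_Titer (hα : α ∈ Ioo (3/4 : ℝ) 1) (n : ℕ) {ε : ℕ → ℝ}
    (hε : ∀ k, |ε k| ≤ 1) :
    LipschitzOnWith (kappa α ^ n).toNNReal (Titer α ε n) (stableCone α) := by
  induction n generalizing ε with
  | zero =>
    rw [pow_zero, Real.toNNReal_one]
    exact LipschitzWith.id.lipschitzOnWith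
  | succ n ih =>
    rw [pow_succ', Real.toNNReal_mul (kappa_nonneg hα)]
    exact (lipschitzOnWith_Tmap hα (hε 0)).comp (ih fun k => hε (k + 1))
      (mapsTo_Titer hα n fun k => hε (k + 1))

theorem lipschitzOnWith_Siter (hα : α ∈ Ioo (3/4 : ℝ) 1) (n : ℕ) {ε : ℕ → ℝ}
    (hε : ∀ k, |ε k| ≤ 1) :
    LipschitzOnWith (kappa α ^ n).toNNReal (Siter α ε n) (unstableCone α) := by
  induction n generalizing ε with
  | zero =>
    rw [pow_zero, Real.toNNReal_one]
    exact LipschitzWith.id.lipschitzOnWith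
  | succ n ih =>
    rw [pow_succ', Real.toNNReal_mul (kappa_nonneg hα)]
    exact (lipschitzOnWith_Smap hα (hε 0)).comp (ih fun k => hε (k + 1))
      (mapsTo_Siter hα n fun k => hε (k + 1))

end

/-- each `T_ε` is κ-Lipschitz on `J₋ = [−θ₀, θ₀]` and each `S_ε` is
κ-Lipschitz on `J₊ = {u : 2|u|(1−α) ≤ θ₀}`; consequently every `n`-fold composition
`T_{ε₀}∘⋯∘T_{ε_{n−1}}` (resp. `S_{ε₀}∘⋯∘S_{ε_{n−1}}`) is `κⁿ`-Lipschitz on `J₋`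
(resp. on `J₊`). -/
theorem statement10 (α : ℝ) (hα : α ∈ Set.Ioo (3/4 : ℝ) 1) :
    (∀ ε : ℝ, ε = 1 ∨ ε = -1 →
      (∀ v ∈ Set.Icc (-(theta0 α)) (theta0 α), ∀ v' ∈ Set.Icc (-(theta0 α)) (theta0 α),
        |Tmap α ε v - Tmap α ε v'| ≤ kappa α * |v - v'|) ∧
      (∀ u ∈ {u : ℝ | 2 * |u| * (1 - α) ≤ theta0 α},
        ∀ u' ∈ {u : ℝ | 2 * |u| * (1 - α) ≤ theta0 α},
        |Smap α ε u - Smap α ε u'| ≤ kappa α * |u - u'|)) ∧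
    (∀ n : ℕ, 1 ≤ n → ∀ ε : ℕ → ℝ, (∀ k, ε k = 1 ∨ ε k = -1) →
      (∀ v ∈ Set.Icc (-(theta0 α)) (theta0 α), ∀ v' ∈ Set.Icc (-(theta0 α)) (theta0 α),
        |Titer α ε n v - Titer α ε n v'| ≤ kappa α ^ n * |v - v'|) ∧
      (∀ u ∈ {u : ℝ | 2 * |u| * (1 - α) ≤ theta0 α},
        ∀ u' ∈ {u : ℝ | 2 * |u| * (1 - α) ≤ theta0 α},
        |Siter α ε n u - Siter α ε n u'| ≤ kappa α ^ n * |u - u'|)) := by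
  have hκ := kappa_nonneg hα
  have abs_le_one {ε : ℝ} (hε : ε = 1 ∨ ε = -1) : |ε| ≤ 1 := ((abs_eq zero_le_one).2 hε).le
  refine ⟨fun ε hε => ⟨fun v hv v' hv' => ?_, fun u hu u' hu' => ?_⟩,
    fun n _ ε hε => ⟨fun v hv v' hv' => ?_, fun u hu u' hu' => ?_⟩⟩
  · exact (lipschitzOnWith_Tmap hα (abs_le_one hε)).abs_sub_le_of_toNNReal hκ hv hv'
  · exact (lipschitzOnWith_Smap hα (abs_le_one hε)).abs_sub_le_of_toNNReal hκ hu hu'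
  · exact (lipschitzOnWith_Titer hα n fun k => abs_le_one (hε k)).abs_sub_le_of_toNNReal
      (pow_nonneg hκ n) hv hv'
  · exact (lipschitzOnWith_Siter hα n fun k => abs_le_one (hε k)).abs_sub_le_of_toNNReal
      (pow_nonneg hκ n) hu hu'
end
end
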